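/- For f(t;x) = x^n + t·g(x) with g(x) = Σ_{k=0}^s t_{s−k}x^{s−k} and n > s ≥ 1 over the field ℝ(t₀,…,t_s,t), the Bezoutian matrix A(t) = M_n(f, ∂f/∂x) decomposes as A(t) = Â(t) + Ã(t), where Ã(t) = t²·M_n(g, g′) has nonzero entries only in the bottom-right s×s block given by (Ã)_{ij} = t²·(M_s(g,g′))_{i−(n−s), j−(n−s)} for n−s+1 ≤ i,j ≤ n, and Â(t) has entries: Â_{11} = n; Â_{1,l_k−1} = Â_{l_k−1,1} = (s−k)t_{s−k}t for 0 ≤ k ≤ s−1; Â_{ij} = −(l_k−2)t_{s−k}t when i+j = l_k and 2 ≤ i,j ≤ l_k−2 (0 ≤ k ≤ s), where l_k = n−s+k+2; and Â_{ij} = 0 otherwise. -/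

import Mathlib

/-!
The Bezoutian numerator `bezNum f₁ f₂ = f₁(x) f₂(y) - f₁(y) f₂(x)` is bilinear, so for
`f = Xⁿ + t g` with `g = ∑ c_k X^k` it splits as
`bez(Xⁿ, (Xⁿ)') + t ∑ c_k (bez(Xⁿ, (X^k)') + bez(X^k, (Xⁿ)')) + t² bez(g, g')`.
Each monomial Bezoutian is `x^b y^b (x^d - y^d)`, whose quotient by `x - y` is a geometric sum
on an antidiagonal. Hence the `k`-th cross term contributes `k` on the first row and column and
`k - n` on the antidiagonal `i + j = n - k`, while `bez(Xⁿ, (Xⁿ)')` gives the corner entry `n`.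
Quotients by `x - y` are unique since `x - y` is monic in `y`, and the quotient of `bez(g, g')`
has degree `< s` in `y`, hence, being symmetric under `x ↔ y`, also in `x`: it lives in the
lower-right `s × s` block.
-/

open Polynomial

/-- The numerator `f₁(x)f₂(y) − f₁(y)f₂(x)` of the Bezoutian generating polynomial,
as an element of `F[x][y]` (inner variable `x`, outer variable `y`). -/
noncomputable def bezNum {F : Type*} [CommRing F] (f₁ f₂ : Polynomial F) :
    Polynomial (Polynomial F) :=
  C f₁ * f₂.map C - f₁.map C * C f₂

/-- The Bezoutian matrix: `α i j` (0-based) is the coefficient of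
`x^(n-1-i) y^(n-1-j)` in the Bezoutian generating polynomial `B`. -/
noncomputable def bezMat {F : Type*} [CommRing F] (n : ℕ)
    (B : Polynomial (Polynomial F)) : Matrix (Fin n) (Fin n) F :=
  fun i j => ((B.coeff (n - 1 - (j : ℕ))).coeff (n - 1 - (i : ℕ)))

open Polynomial.Bivariate

section Bezoutian

variable {R : Type*} [CommRing R]

lemma smul_eq_C_C_mul (a : R) (p : R[X][Y]) : a • p = C (C a) * p := by
  rw [Algebra.smul_def, Polynomial.algebraMap_apply, Polynomial.algebraMap_eq]

noncomputable def bezForm : R[X] →ₗ[R] R[X] →ₗ[R] R[X][Y] :=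
  LinearMap.mk₂ R bezNum
    (fun f f' g => by simp only [bezNum, map_add, Polynomial.map_add]; ring)
    (fun a f g => by
      simp only [bezNum, smul_eq_C_C_mul, smul_eq_C_mul, map_mul, Polynomial.map_mul, map_C]; ring)
    (fun f g g' => by simp only [bezNum, map_add, Polynomial.map_add]; ring)
    (fun a f g => by
      simp only [bezNum, smul_eq_C_C_mul, smul_eq_C_mul, map_mul, Polynomial.map_mul, map_C]; ring)

lemma bezForm_apply (f₁ f₂ : R[X]) : bezForm f₁ f₂ = bezNum f₁ f₂ := rfl

lemma bezNum_X_pow_add_C_mul (n : ℕ) (t : R) (g : R[X]) :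
    bezNum (X ^ n + C t * g) (derivative (X ^ n + C t * g)) =
      bezNum (X ^ n) (derivative (X ^ n)) +
        t • (bezNum (X ^ n) (derivative g) + bezNum g (derivative (X ^ n))) +
        t ^ 2 • bezNum g (derivative g) := by
  simp only [← smul_eq_C_mul, ← bezForm_apply, map_add, map_smul, LinearMap.add_apply,
    LinearMap.smul_apply]
  module

lemma bezNum_X_pow_derivative_add_sum (n s : ℕ) (c : ℕ → R) :
    bezNum (X ^ n) (derivative (∑ k ∈ Finset.range (s + 1), C (c k) * X ^ k)) +
        bezNum (∑ k ∈ Finset.range (s + 1), C (c k) * X ^ k) (derivative (X ^ n)) =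
      ∑ k ∈ Finset.range (s + 1),
        c k • (bezNum (X ^ n) (derivative (X ^ k)) + bezNum (X ^ k) (derivative (X ^ n))) := by
  simp only [← smul_eq_C_mul, ← bezForm_apply, map_sum, map_smul, LinearMap.sum_apply,
    LinearMap.smul_apply, smul_add, Finset.sum_add_distrib]

lemma cancel_CX_sub_Y {a b : R[X][Y]} (h : (C X - Y) * a = (C X - Y) * b) : a = b :=
  (monic_X_sub_C (X : R[X])).isRegular.left (by linear_combination -h)

lemma coeff_coeff_C_X_pow_mul_X_pow (a b p q : ℕ) :
    ((C (X ^ a) * Y ^ b : R[X][Y]).coeff q).coeff p = if p = a ∧ q = b then 1 else 0 := by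
  rw [coeff_C_mul_X_pow]
  split_ifs <;> simp_all [coeff_X_pow]

noncomputable def antidiag (b d : ℕ) : R[X][Y] :=
  ∑ i ∈ Finset.range d, C (X ^ (b + i)) * Y ^ (b + (d - 1 - i))

lemma CX_sub_Y_mul_antidiag (b d : ℕ) :
    (C X - Y) * antidiag b d = (bezNum (X ^ (b + d)) (X ^ b) : R[X][Y]) := by
  have h : (antidiag b d : R[X][Y]) =
      C X ^ b * Y ^ b * ∑ i ∈ Finset.range d, C X ^ i * Y ^ (d - 1 - i) := by
    simp only [antidiag, Finset.mul_sum, pow_add, map_mul, map_pow]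
    exact Finset.sum_congr rfl fun i _ => by ring
  rw [h, bezNum, mul_left_comm, mul_comm (C X - Y), geom_sum₂_mul]
  simp only [Polynomial.map_pow, Polynomial.map_mul, map_X, pow_add, map_mul, map_pow]
  ring

lemma coeff_coeff_antidiag (b d p q : ℕ) :
    ((antidiag b d : R[X][Y]).coeff q).coeff p =
      if b ≤ p ∧ p < b + d ∧ p + q = 2 * b + d - 1 then 1 else 0 := by
  have hterm : ∀ i ∈ Finset.range d,
      ((C (X ^ (b + i)) * Y ^ (b + (d - 1 - i)) : R[X][Y]).coeff q).coeff p =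
        if i = p - b then (if b ≤ p ∧ p < b + d ∧ p + q = 2 * b + d - 1 then 1 else 0)
        else 0 := by
    intro i hi
    rw [Finset.mem_range] at hi
    rw [coeff_coeff_C_X_pow_mul_X_pow]
    split_ifs <;> first | rfl | omega
  rw [antidiag, finsetSum_coeff, finsetSum_coeff, Finset.sum_congr rfl hterm, Finset.sum_ite_eq']
  simp only [Finset.mem_range]
  split_ifs <;> first | rfl | omega

/-- For `k = 0` the truncated exponent `k - 1` is harmless: that term is scaled by `k`. -/
noncomputable def bezCrossQuot (n k : ℕ) : R[X][Y] :=
  (k : R) • (C (X ^ (k - 1)) * Y ^ (n - 1) + C (X ^ (n - 1)) * Y ^ (k - 1)) +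
    ((k : R) - n) • antidiag k (n - 1 - k)

lemma CX_sub_Y_mul_bezCrossQuot {n k : ℕ} (hk : k < n) :
    (C X - Y) * bezCrossQuot n k =
      (bezNum (X ^ n) (derivative (X ^ k)) + bezNum (X ^ k) (derivative (X ^ n)) : R[X][Y]) := by
  obtain ⟨n, rfl⟩ : ∃ m, n = m + 1 := ⟨n - 1, by omega⟩
  have hdiag := CX_sub_Y_mul_antidiag (R := R) k (n - k)
  rw [show k + (n - k) = n by omega] at hdiag
  rw [bezCrossQuot, mul_add, mul_smul_comm, mul_smul_comm, add_tsub_cancel_right, hdiag]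
  simp only [bezNum, derivative_X_pow, smul_eq_C_C_mul, Polynomial.map_mul, Polynomial.map_pow,
    Polynomial.map_natCast, map_X, map_mul, map_pow, map_sub, map_natCast]
  rcases k with _ | k
  · simp only [Nat.cast_zero, zero_tsub, add_tsub_cancel_right]
    ring
  · simp only [add_tsub_cancel_right]
    push_cast
    obtain ⟨r, rfl⟩ : ∃ r, n = k + 1 + r := ⟨n - (k + 1), by omega⟩
    ring

lemma coeff_coeff_bezCrossQuot {n k i j : ℕ} (hk : k < n) (hi : i < n) (hj : j < n) :
    ((bezCrossQuot n k : R[X][Y]).coeff (n - 1 - j)).coeff (n - 1 - i) =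
      if k + i + j = n then (if i = 0 ∨ j = 0 then (k : R) else k - n) else 0 := by
  simp only [bezCrossQuot, coeff_add, coeff_smul, coeff_coeff_C_X_pow_mul_X_pow,
    coeff_coeff_antidiag, smul_eq_mul]
  split_ifs <;> first | omega | (rw [show k = 0 by omega]; simp) | ring

lemma smul_CX_sub_Y_mul_C_X_pow_mul_X_pow (n : ℕ) :
    (n : R) • ((C X - Y) * (C (X ^ (n - 1)) * Y ^ (n - 1))) =
      (bezNum (X ^ n) (derivative (X ^ n)) : R[X][Y]) := by
  rcases n with _ | n
  · simp [bezNum]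
  simp only [bezNum, derivative_X_pow, smul_eq_C_C_mul, Polynomial.map_mul, Polynomial.map_pow,
    Polynomial.map_natCast, map_X, map_mul, map_pow, map_natCast, add_tsub_cancel_right]
  ring

lemma eq_of_CX_sub_Y_mul_eq_bezNum_X_pow_add {s n : ℕ} (hsn : s < n) (t : R) (c : ℕ → R)
    {g : R[X]} (hg : g = ∑ k ∈ Finset.range (s + 1), C (c k) * X ^ k) {B Bg : R[X][Y]}
    (hB : (C X - Y) * B = bezNum (X ^ n + C t * g) (derivative (X ^ n + C t * g)))
    (hBg : (C X - Y) * Bg = bezNum g (derivative g)) :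
    B = (n : R) • (C (X ^ (n - 1)) * Y ^ (n - 1)) +
      t • ∑ k ∈ Finset.range (s + 1), c k • bezCrossQuot n k + t ^ 2 • Bg := by
  refine cancel_CX_sub_Y ?_
  have hcross : ∀ k ∈ Finset.range (s + 1),
      c k • ((C X - Y) * (bezCrossQuot n k : R[X][Y])) =
        c k • (bezNum (X ^ n) (derivative (X ^ k)) + bezNum (X ^ k) (derivative (X ^ n))) :=
    fun k hk => by rw [CX_sub_Y_mul_bezCrossQuot (by simp at hk; omega)]
  simp only [mul_add, mul_smul_comm, Finset.mul_sum]
  rw [hB, bezNum_X_pow_add_C_mul, hBg, smul_CX_sub_Y_mul_C_X_pow_mul_X_pow,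
    Finset.sum_congr rfl hcross, hg, bezNum_X_pow_derivative_add_sum]

lemma coeff_coeff_sum_smul_bezCrossQuot {s n i j : ℕ} (c : ℕ → R) (hsn : s < n) (hi : i < n)
    (hj : j < n) :
    ((∑ k ∈ Finset.range (s + 1), c k • bezCrossQuot n k : R[X][Y]).coeff (n - 1 - j)).coeff
        (n - 1 - i) =
      if n ≤ i + j + s ∧ i + j ≤ n then
        c (n - (i + j)) * if i = 0 ∨ j = 0 then ((n - (i + j) : ℕ) : R) else -((i + j : ℕ) : R)
      else 0 := by
  have hterm : ∀ k ∈ Finset.range (s + 1),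
      ((c k • bezCrossQuot n k : R[X][Y]).coeff (n - 1 - j)).coeff (n - 1 - i) =
        if k = n - (i + j) then
          (if i + j ≤ n then c k * if i = 0 ∨ j = 0 then (k : R) else k - n else 0)
        else 0 := by
    intro k hk
    rw [Finset.mem_range] at hk
    rw [coeff_smul, coeff_smul, coeff_coeff_bezCrossQuot (by omega) hi hj, smul_eq_mul]
    split_ifs <;> first | omega | simp
  rw [finsetSum_coeff, finsetSum_coeff, Finset.sum_congr rfl hterm, Finset.sum_ite_eq']
  simp only [Finset.mem_range]
  by_cases hij : n ≤ i + j + s ∧ i + j ≤ n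
  · rw [if_pos (by omega), if_pos hij, if_pos hij.2, Nat.cast_sub hij.2]
    split_ifs <;> ring
  · rw [if_neg hij]
    split_ifs <;> first | omega | rfl

lemma coeff_coeff_eq_dite_bezMat {s n : ℕ} (hsn : s ≤ n) {B : R[X][Y]}
    (hB : ∀ p q, s ≤ p ∨ s ≤ q → (B.coeff q).coeff p = 0) (i j : Fin n) :
    (B.coeff (n - 1 - j)).coeff (n - 1 - i) =
      if h : n - s ≤ (i : ℕ) ∧ n - s ≤ (j : ℕ) then
        bezMat s B ⟨(i : ℕ) - (n - s), by omega⟩ ⟨(j : ℕ) - (n - s), by omega⟩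
      else 0 := by
  have := i.isLt
  have := j.isLt
  split_ifs with h
  · simp only [bezMat]
    rw [show s - 1 - ((j : ℕ) - (n - s)) = n - 1 - j by omega,
      show s - 1 - ((i : ℕ) - (n - s)) = n - 1 - i by omega]
  · exact hB _ _ (by omega)

lemma swap_bezNum (f₁ f₂ : R[X]) : swap (bezNum f₁ f₂) = -bezNum f₁ f₂ := by
  simp only [bezNum, map_sub, map_mul, swap_C, swap_map_C]
  ring

lemma swap_CX_sub_Y : swap (C X - Y : R[X][Y]) = -(C X - Y) := by
  simp only [map_sub, swap_X, swap_Y]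
  ring

lemma coeff_coeff_swap (p : R[X][Y]) (i j : ℕ) :
    ((swap p).coeff j).coeff i = (p.coeff i).coeff j := by
  induction p using Polynomial.induction_on' with
  | add p q hp hq => simp only [map_add, coeff_add, hp, hq]
  | monomial m a =>
    induction a using Polynomial.induction_on' with
    | add a b ha hb => simp only [map_add, coeff_add, ha, hb]
    | monomial k r =>
      rw [swap_monomial_monomial]
      simp only [coeff_monomial]
      split_ifs <;> simp_all [coeff_monomial]

lemma natDegree_bezNum_le {f₁ f₂ : R[X]} {d : ℕ} (h₁ : f₁.natDegree ≤ d)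
    (h₂ : f₂.natDegree ≤ d) : (bezNum f₁ f₂).natDegree ≤ d := by
  refine (natDegree_sub_le _ _).trans (max_le ?_ ?_)
  · exact natDegree_C_mul_le _ _ |>.trans <| natDegree_map_le.trans h₂
  · exact natDegree_mul_C_le _ _ |>.trans <| natDegree_map_le.trans h₁

variable [Nontrivial R]

lemma coeff_eq_zero_of_CX_sub_Y_mul_eq {B N : R[X][Y]} {d e : ℕ} (h : (C X - Y) * B = N)
    (hN : N.natDegree ≤ d) (he : d ≤ e) : B.coeff e = 0 := by
  rcases eq_or_ne B 0 with rfl | hB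
  · simp
  have hdeg : B.natDegree + 1 = N.natDegree := by
    rw [← natDegree_neg N, ← h, show -((C X - Y) * B) = (Y - C X : R[X][Y]) * B by ring,
      (monic_X_sub_C _).natDegree_mul' hB, natDegree_X_sub_C, add_comm]
  exact coeff_eq_zero_of_natDegree_lt (by omega)

lemma coeff_eq_zero_of_CX_sub_Y_mul_eq_bezNum {B : R[X][Y]} {f₁ f₂ : R[X]} {d e : ℕ}
    (h : (C X - Y) * B = bezNum f₁ f₂) (h₁ : f₁.natDegree ≤ d) (h₂ : f₂.natDegree ≤ d)
    (he : d ≤ e) : B.coeff e = 0 :=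
  coeff_eq_zero_of_CX_sub_Y_mul_eq h (natDegree_bezNum_le h₁ h₂) he

lemma coeff_coeff_eq_zero_of_CX_sub_Y_mul_eq_bezNum {B : R[X][Y]} {f₁ f₂ : R[X]} {d e : ℕ}
    (h : (C X - Y) * B = bezNum f₁ f₂) (h₁ : f₁.natDegree ≤ d) (h₂ : f₂.natDegree ≤ d)
    (he : d ≤ e) (j : ℕ) : (B.coeff j).coeff e = 0 := by
  have hswap : (C X - Y) * swap B = bezNum f₁ f₂ := by
    have := congrArg swap h
    rw [map_mul, swap_CX_sub_Y, swap_bezNum] at this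
    linear_combination -this
  rw [← coeff_coeff_swap, coeff_eq_zero_of_CX_sub_Y_mul_eq_bezNum hswap h₁ h₂ he, coeff_zero]

end Bezoutian

lemma natDegree_sum_C_mul_X_pow_le {R : Type*} [Semiring R] (s : ℕ) (c : ℕ → R) :
    (∑ k ∈ Finset.range (s + 1), C (c k) * X ^ k).natDegree ≤ s :=
  natDegree_sum_le_of_forall_le _ _ fun k hk =>
    (natDegree_C_mul_X_pow_le _ _).trans (by simp at hk; omega)

/-- Indices are `0`-based (the paper's are `I = i + 1`, `J = j + 1`) and `c k` is the paper's
`t_k`, so on the band `I + J = l_k` the index `n + 2 - (I + J)` is `s - k`. -/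
theorem stmt19 {F : Type*} [Field F] (s n : ℕ)
    (hsn : s < n) (t : F) (c : ℕ → F)
    (g : Polynomial F) (hg : g = ∑ k ∈ Finset.range (s + 1), C (c k) * X ^ k)
    (Bf Bg : Polynomial (Polynomial F))
    (hBf : (C (X : Polynomial F) - X) * Bf =
      bezNum (X ^ n + C t * g) (X ^ n + C t * g).derivative)
    (hBg : (C (X : Polynomial F) - X) * Bg = bezNum g g.derivative) :
    ∀ i j : Fin n,
      bezMat n Bf i j =
        (if (i : ℕ) + 1 = 1 ∧ (j : ℕ) + 1 = 1 then (n : F)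
          else if (i : ℕ) + 1 = 1 ∧ n - s + 1 ≤ (j : ℕ) + 1 then
            ((n + 1 - ((j : ℕ) + 1) : ℕ) : F) * c (n + 1 - ((j : ℕ) + 1)) * t
          else if (j : ℕ) + 1 = 1 ∧ n - s + 1 ≤ (i : ℕ) + 1 then
            ((n + 1 - ((i : ℕ) + 1) : ℕ) : F) * c (n + 1 - ((i : ℕ) + 1)) * t
          else if 2 ≤ (i : ℕ) + 1 ∧ 2 ≤ (j : ℕ) + 1 ∧
              n - s + 2 ≤ (i : ℕ) + 1 + ((j : ℕ) + 1) ∧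
              (i : ℕ) + 1 + ((j : ℕ) + 1) ≤ n + 2 then
            -((((i : ℕ) + 1 + ((j : ℕ) + 1) - 2 : ℕ) : F)) *
              c (n + 2 - ((i : ℕ) + 1 + ((j : ℕ) + 1))) * t
          else 0) +
        (if h : n - s ≤ (i : ℕ) ∧ n - s ≤ (j : ℕ) then
            t ^ 2 * bezMat s Bg ⟨(i : ℕ) - (n - s), by omega⟩
              ⟨(j : ℕ) - (n - s), by omega⟩
          else 0) := by
  intro i j
  have hg_deg : g.natDegree ≤ s := hg ▸ natDegree_sum_C_mul_X_pow_le s c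
  have hg'_deg : (derivative g).natDegree ≤ s := (natDegree_derivative_le g).trans (by omega)
  have hBg_block : ∀ p q, s ≤ p ∨ s ≤ q → (Bg.coeff q).coeff p = 0 := by
    rintro p q (hp | hq)
    · exact coeff_coeff_eq_zero_of_CX_sub_Y_mul_eq_bezNum hBg hg_deg hg'_deg hp q
    · rw [coeff_eq_zero_of_CX_sub_Y_mul_eq_bezNum hBg hg_deg hg'_deg hq, coeff_zero]
  rw [bezMat, eq_of_CX_sub_Y_mul_eq_bezNum_X_pow_add hsn t c hg hBf hBg]
  simp only [coeff_add, coeff_smul, smul_eq_mul, coeff_coeff_C_X_pow_mul_X_pow,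
    coeff_coeff_sum_smul_bezCrossQuot c hsn i.isLt j.isLt,
    coeff_coeff_eq_dite_bezMat hsn.le hBg_block, mul_dite, mul_zero]
  congr 1
  have := i.isLt
  have := j.isLt
  split_ifs <;> try omega
  -- corner, first row, first column, band, elsewhere
  · ring
  · rw [show n + 1 - ((j : ℕ) + 1) = n - (i + j) by omega]
    ring
  · rw [show n + 1 - ((i : ℕ) + 1) = n - (i + j) by omega]
    ring
  · rw [show (i : ℕ) + 1 + ((j : ℕ) + 1) - 2 = i + j by omega,
      show n + 2 - ((i : ℕ) + 1 + ((j : ℕ) + 1)) = n - (i + j) by omega]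
    ring
  · ring
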